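/- arXiv:1808.03130 — 2 statements merged into one kernel-verified Lean document; each statement's English description precedes it below -/
import Mathlib

section
/- In a rooted forest with p pairwise non-isomorphic subtrees in which some fixed relation r strictly descends, if a descending r-path visited more than p nodes then two visited nodes would root isomorphic subtrees, yielding an infinite simple r-path; hence, if the forest contains no infinite simple r-path, every descending r-path visits at most p nodes. -/
/-!
Two nodes `u`, `v` of the path with the same subtree class are joined by an `r`-path, and the
embedding `φ` of the subtree at `u` into the one at `v` carries that path onto an `r`-path from
`v = φ u` to `φ v = φ² u`, then onto one from `φ² u` to `φ³ u`, and so on. Gluing these copies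
gives an infinite `r`-path, which is simple because depth strictly increases along it.
-/

open Relation

section

variable {α β : Type*} {r : α → α → Prop}

theorem List.Pairwise.exists_rel_map_eq [Fintype β] {l : List α} (hl : l.Pairwise r) (f : α → β)
    (hlen : Fintype.card β < l.length) : ∃ x y, r x y ∧ f x = f y := by
  by_contra! hne
  have hnodup : (l.map f).Nodup := hl.map f hne
  exact (hnodup.length_le_card.trans_lt (by simpa using hlen)).false

theorem exists_seq_rel_of_forall_exists {s : Set α} {a : α} (ha : a ∈ s)
    (hs : ∀ x ∈ s, ∃ y ∈ s, r x y) : ∃ f : ℕ → α, ∀ n, r (f n) (f (n + 1)) := by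
  choose! g hgs hgr using hs
  refine ⟨fun n => g^[n] a, fun n => ?_⟩
  simp only [Function.iterate_succ_apply']
  exact hgr _ (Set.MapsTo.iterate hgs n ha)

theorem rel_iterate_of_rel_map {φ : α → α} (hφ : ∀ x y, r x y → r (φ x) (φ y)) (n : ℕ) :
    ∀ x y, r x y → r (φ^[n] x) (φ^[n] y) := by
  induction n with
  | zero => exact fun _ _ h => h
  | succ n ih => exact fun x y h => ih _ _ (hφ x y h)

theorem exists_seq_rel_of_transGen_map_self {φ : α → α} (hφ : ∀ x y, r x y → r (φ x) (φ y))
    {u : α} (hu : TransGen r u (φ u)) : ∃ f : ℕ → α, ∀ n, r (f n) (f (n + 1)) := by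
  have hstep (n : ℕ) : TransGen r (φ^[n] u) (φ^[n + 1] u) :=
    hu.lift (φ^[n]) (rel_iterate_of_rel_map hφ n)
  refine exists_seq_rel_of_forall_exists (s := {x | ∃ n, ReflTransGen r x (φ^[n] u)})
    ⟨0, .refl⟩ ?_
  rintro x ⟨n, hx⟩
  obtain ⟨y, hxy, hy⟩ := TransGen.head'_iff.mp (TransGen.trans_right hx (hstep n))
  exact ⟨y, ⟨n + 1, hy⟩, hxy⟩

end

/-- In a rooted forest whose subtrees fall into at most `p` isomorphism classes
(recorded by `cls : V → Fin p`), equipped with a relation `r` that strictly descends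
(witnessed by a depth function), suppose that whenever two nodes root isomorphic
subtrees and one is strictly deeper than the other, there is an embedding of the
shallower subtree into the deeper one that maps the one node to the other, preserves
`r`, and shifts depths accordingly.  If a descending `r`-path visited more than `p`
nodes then two visited nodes would root isomorphic subtrees, yielding an infinite
simple `r`-path; hence, if the forest contains no infinite simple `r`-path, every
descending `r`-path visits at most `p` nodes. -/
theorem descending_path_bound {V : Type*} (r : V → V → Prop) (p : ℕ)
    (depth : V → ℕ) (cls : V → Fin p)
    (hdesc : ∀ x y, r x y → depth x < depth y)
    (hiso : ∀ u v, cls u = cls v → depth u < depth v →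
      ∃ φ : V → V, φ u = v ∧ (∀ x y, r x y → r (φ x) (φ y)) ∧
        (∀ x, depth (φ x) = depth x + (depth v - depth u)))
    (hnoinf : ¬ ∃ f : ℕ → V, (∀ i, r (f i) (f (i + 1))) ∧ Function.Injective f) :
    ∀ l : List V, List.Chain' r l → l.length ≤ p := by
  intro l hl
  by_contra! hlen
  have hpath : l.Pairwise (TransGen r) :=
    List.isChain_iff_pairwise.mp (hl.imp fun _ _ => TransGen.single)
  obtain ⟨u, v, huv, hcls⟩ := hpath.exists_rel_map_eq cls (by simpa using hlen)
  have hdepth : depth u < depth v := by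
    simpa [transGen_eq_self] using huv.lift depth hdesc
  obtain ⟨φ, rfl, hφ, -⟩ := hiso u _ hcls hdepth
  obtain ⟨f, hf⟩ := exists_seq_rel_of_transGen_map_self hφ huv
  have hmono : StrictMono (depth ∘ f) := strictMono_nat_of_lt_succ fun n => hdesc _ _ (hf n)
  exact hnoinf ⟨f, hf, hmono.injective.of_comp⟩
end

section
/- If a forest automaton with Büchi acceptance accepts some forest, then it accepts a regular forest, i.e., one with finitely many non-isomorphic subtrees. -/
open scoped Classical

/-- A forest (presented as a tree of addresses over `Fin N`, with a virtual root `[]`)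
of branching at most `N`, with node labels in `Sg` and edge labels in `Γ`
(the edge label of a node is the label of the edge from its parent). -/
structure LForest (N : ℕ) (Sg Γ : Type) where
  dom : Set (List (Fin N))
  root_mem : [] ∈ dom
  prefixClosed : ∀ (l : List (Fin N)) (i : Fin N), l ++ [i] ∈ dom → l ∈ dom
  nlabel : List (Fin N) → Sg
  elabel : List (Fin N) → Γ

/-- A top-down forest automaton with Büchi acceptance: states `Q`, a transition
relation `δ` relating the state and label of a node to the edge labels and states of
its (possibly absent) children, and a set `final` of marked states. -/
structure ForestAutomaton (N : ℕ) (Sg Γ Q : Type) where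
  δ : Q → Sg → (Fin N → Option (Γ × Q)) → Prop
  init : Set Q
  final : Set Q

/-- `ρ` is a run of the automaton `A` on the forest `F`. -/
def IsRun {N : ℕ} {Sg Γ Q : Type} (A : ForestAutomaton N Sg Γ Q)
    (F : LForest N Sg Γ) (ρ : List (Fin N) → Q) : Prop :=
  ρ [] ∈ A.init ∧
  ∀ l ∈ F.dom, A.δ (ρ l) (F.nlabel l)
    (fun i => if l ++ [i] ∈ F.dom then some (F.elabel (l ++ [i]), ρ (l ++ [i])) else none)

/-- The address of the `n`-th node on the infinite branch `b`. -/
def branchPrefix {N : ℕ} (b : ℕ → Fin N) (n : ℕ) : List (Fin N) :=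
  (List.range n).map b

/-- The run `ρ` is accepting (Büchi): on every infinite branch of the forest, marked
states occur infinitely often. -/
def IsAccepting {N : ℕ} {Sg Γ Q : Type} (A : ForestAutomaton N Sg Γ Q)
    (F : LForest N Sg Γ) (ρ : List (Fin N) → Q) : Prop :=
  ∀ b : ℕ → Fin N, (∀ n : ℕ, branchPrefix b n ∈ F.dom) →
    ∀ n : ℕ, ∃ m : ℕ, n ≤ m ∧ ρ (branchPrefix b m) ∈ A.final

/-- The automaton `A` accepts the forest `F`. -/
def Accepts {N : ℕ} {Sg Γ Q : Type} (A : ForestAutomaton N Sg Γ Q)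
    (F : LForest N Sg Γ) : Prop :=
  ∃ ρ : List (Fin N) → Q, IsRun A F ρ ∧ IsAccepting A F ρ

/-- The subtree of the forest `F` rooted at the node `l`. -/
def subtreeAt {N : ℕ} {Sg Γ : Type} (F : LForest N Sg Γ) (l : List (Fin N))
    (hl : l ∈ F.dom) : LForest N Sg Γ where
  dom := {l' | l ++ l' ∈ F.dom}
  root_mem := by simpa using hl
  prefixClosed := by
    intro l' i h
    have := F.prefixClosed (l ++ l') i (by simpa [List.append_assoc] using h)
    simpa using this
  nlabel := fun l' => F.nlabel (l ++ l')
  elabel := fun l' => F.elabel (l ++ l')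

/-- A forest is regular if it has only finitely many distinct subtrees. -/
def Regular {N : ℕ} {Sg Γ : Type} (F : LForest N Sg Γ) : Prop :=
  {S : LForest N Sg Γ | ∃ (l : List (Fin N)) (hl : l ∈ F.dom), S = subtreeAt F l hl}.Finite

/-!
Rank the nodes of an accepted forest by the well-founded relation "is a child whose state is
unmarked"; it is well-founded because the run is Büchi accepting. For every state choose a node
of minimal rank carrying it, and rebuild the forest so that every node branches like the chosen
representative of its state. The run carries over, every subtree of the new forest is determined
by a representative and a child index, and a branch avoiding marked states from some point on
would make the ranks of the visited representatives decrease forever.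
-/

theorem LForest.ext {N : ℕ} {Sg Γ : Type} {F G : LForest N Sg Γ} (hdom : F.dom = G.dom)
    (hnlabel : F.nlabel = G.nlabel) (helabel : F.elabel = G.elabel) : F = G := by
  cases F; cases G; subst hdom hnlabel helabel; rfl

theorem LForest.mem_dom_of_prefix {N : ℕ} {Sg Γ : Type} (F : LForest N Sg Γ)
    {l w : List (Fin N)} (h : l <+: w) (hw : w ∈ F.dom) : l ∈ F.dom := by
  obtain ⟨t, rfl⟩ := h
  induction t using List.reverseRecOn with
  | nil => simpa using hw
  | append_singleton t i ih => exact ih (F.prefixClosed _ i (by simpa using hw))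

theorem branchPrefix_succ {N : ℕ} (b : ℕ → Fin N) (n : ℕ) :
    branchPrefix b (n + 1) = branchPrefix b n ++ [b n] := by
  simp [branchPrefix, List.range_succ]

theorem exists_forall_branchPrefix_mem {N : ℕ} {S : Set (List (Fin N))} (hnil : [] ∈ S)
    (hchild : ∀ w ∈ S, ∃ i, w ++ [i] ∈ S) :
    ∃ b : ℕ → Fin N, ∀ n, branchPrefix b n ∈ S := by
  have : Nonempty (Fin N) := ⟨(hchild [] hnil).choose⟩
  choose! c hc using hchild
  let g : ℕ → List (Fin N) := fun n => n.rec [] fun _ w => w ++ [c w]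
  have hg : ∀ n, g n ∈ S := fun n => n.rec hnil fun _ ih => hc _ ih
  refine ⟨fun n => c (g n), fun n => ?_⟩
  suffices branchPrefix (fun n => c (g n)) n = g n from this ▸ hg n
  induction n with
  | zero => rfl
  | succ n ih => rw [branchPrefix_succ, ih]

theorem exists_section_le_of_wellFoundedLT {α β γ : Type*} [Nonempty α] [LinearOrder γ]
    [WellFoundedLT γ] (s : Set α) (f : α → β) (μ : α → γ) :
    ∃ g : β → α, ∀ a ∈ s, g (f a) ∈ s ∧ f (g (f a)) = f a ∧ μ (g (f a)) ≤ μ a := by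
  let fibre (b : β) : Set α := {a | a ∈ s ∧ f a = b}
  refine ⟨fun b => if h : (fibre b).Nonempty then Function.argminOn μ _ h
    else Classical.arbitrary α, fun a ha => ?_⟩
  have ha' : a ∈ fibre (f a) := ⟨ha, rfl⟩
  have hmem := Function.argminOn_mem μ (fibre (f a)) ⟨a, ha'⟩
  dsimp only
  rw [dif_pos ⟨a, ha'⟩]
  exact ⟨hmem.1, hmem.2, Function.argminOn_le μ _ ha'⟩

section Unfold

variable {N : ℕ} {Sg Γ : Type} {X : Type*} (E : X → Fin N → Prop) (step : X → Fin N → X)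

def IsPath : X → List (Fin N) → Prop
  | _, [] => True
  | x, i :: w => E x i ∧ IsPath (step x i) w

variable {E step}

theorem isPath_append {x : X} {w v : List (Fin N)} :
    IsPath E step x (w ++ v) ↔ IsPath E step x w ∧ IsPath E step (w.foldl step x) v := by
  induction w generalizing x with
  | nil => simp [IsPath]
  | cons i w ih => simp [IsPath, ih, and_assoc]

theorem IsPath.foldl_mem {x : X} {w : List (Fin N)} {s : Set X} (hw : IsPath E step x w)
    (hx : x ∈ s) (hs : ∀ y ∈ s, ∀ i, E y i → step y i ∈ s) : w.foldl step x ∈ s := by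
  induction w generalizing x with
  | nil => exact hx
  | cons i w ih => exact ih hw.2 (hs x hx i hw.1)

variable (E step)

def unfold (nl : X → Sg) (el : X → Γ) (x : X) : LForest N Sg Γ where
  dom := {w | IsPath E step x w}
  root_mem := trivial
  prefixClosed _ _ h := (isPath_append.1 h).1
  nlabel w := nl (w.foldl step x)
  elabel w := el (w.foldl step x)

variable {E step} {nl : X → Sg} {el : X → Γ} {x : X}

theorem subtreeAt_unfold {w : List (Fin N)} (hw : w ∈ (unfold E step nl el x).dom) :
    subtreeAt (unfold E step nl el x) w hw = unfold E step nl el (w.foldl step x) :=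
  LForest.ext (Set.ext fun _ => isPath_append.trans (and_iff_right hw))
    (funext fun _ => by simp [subtreeAt, unfold]) (funext fun _ => by simp [subtreeAt, unfold])

theorem regular_unfold (h : (Set.range fun w : List (Fin N) => w.foldl step x).Finite) :
    Regular (unfold E step nl el x) := by
  refine (h.image (unfold E step nl el)).subset ?_
  rintro _ ⟨w, hw, rfl⟩
  exact ⟨_, ⟨w, rfl⟩, (subtreeAt_unfold hw).symm⟩

theorem isRun_unfold {Q : Type} {A : ForestAutomaton N Sg Γ Q} {r : X → Q} {s : Set X}
    (hx : x ∈ s) (hs : ∀ y ∈ s, ∀ i, E y i → step y i ∈ s) (hinit : r x ∈ A.init)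
    (hδ : ∀ y ∈ s, A.δ (r y) (nl y)
      fun i => if E y i then some (el (step y i), r (step y i)) else none) :
    IsRun A (unfold E step nl el x) fun w => r (w.foldl step x) := by
  refine ⟨hinit, fun w (hw : IsPath E step x w) => ?_⟩
  simpa [unfold, isPath_append, IsPath, hw] using hδ _ (hw.foldl_mem hx hs)

end Unfold

section Collapse

variable {N : ℕ} {Sg Γ Q : Type} {A : ForestAutomaton N Sg Γ Q} {F : LForest N Sg Γ}
  {ρ : List (Fin N) → Q}

variable (A F ρ) in
def UnmarkedChild (c p : List (Fin N)) : Prop :=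
  c ∈ F.dom ∧ ρ c ∉ A.final ∧ ∃ i, c = p ++ [i]

theorem wellFounded_unmarkedChild (hacc : IsAccepting A F ρ) :
    WellFounded (UnmarkedChild A F ρ) := by
  set R := UnmarkedChild A F ρ
  have hchild : ∀ w, ¬Acc R w →
      ∃ i, w ++ [i] ∈ F.dom ∧ ρ (w ++ [i]) ∉ A.final ∧ ¬Acc R (w ++ [i]) := by
    intro w hw
    by_contra! h
    exact hw ⟨_, by rintro _ ⟨hc, hf, i, rfl⟩; exact h i hc hf⟩
  refine ⟨fun l => by_contra fun hl => ?_⟩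
  have hl_dom : l ∈ F.dom := by
    obtain ⟨i, hi, -⟩ := hchild l hl
    exact F.prefixClosed l i hi
  -- the path to `l` followed by an infinite unmarked descent: a branch violating acceptance
  let S := {w | w ∈ F.dom ∧ (w <+: l ∨ l.length < w.length ∧ ρ w ∉ A.final ∧ ¬Acc R w)}
  have hS : ∀ w ∈ S, ∃ i, w ++ [i] ∈ S := by
    rintro w ⟨-, hwl | ⟨hlen, -, hw⟩⟩
    · rcases hwl.length_le.lt_or_eq with hlt | heq
      · refine ⟨l[w.length], ?_⟩
        have hchild_prefix : w ++ [l[w.length]] = l.take (w.length + 1) := by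
          rw [List.take_succ_eq_append_getElem hlt, ← List.prefix_iff_eq_take.1 hwl]
        rw [hchild_prefix]
        exact ⟨F.mem_dom_of_prefix (List.take_prefix _ _) hl_dom, .inl (List.take_prefix _ _)⟩
      · obtain rfl := hwl.eq_of_length heq
        obtain ⟨i, hi, hf, hna⟩ := hchild w hl
        exact ⟨i, hi, .inr ⟨by simp, hf, hna⟩⟩
    · obtain ⟨i, hi, hf, hna⟩ := hchild w hw
      exact ⟨i, hi, .inr ⟨by rw [List.length_append, List.length_singleton]; omega, hf, hna⟩⟩
  have hnil : [] ∈ S := ⟨F.root_mem, .inl List.nil_prefix⟩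
  obtain ⟨b, hb⟩ := exists_forall_branchPrefix_mem hnil hS
  obtain ⟨m, hm, hfinal⟩ := hacc b (fun n => (hb n).1) (l.length + 1)
  rcases (hb m).2 with hpre | ⟨-, hnf, -⟩
  · have := hpre.length_le
    rw [branchPrefix, List.length_map, List.length_range] at this
    omega
  · exact hnf hfinal

variable (ρ) (rep : Q → List (Fin N))

/-- The vertices of the collapsed forest are nodes of `F` entered along an edge, so that they
carry their edge label; a vertex branches like the representative of its state. -/
def collapseStep (c : List (Fin N)) (i : Fin N) : List (Fin N) := rep (ρ c) ++ [i]

variable (F) in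
def LForest.collapse : LForest N Sg Γ :=
  unfold (fun c i => collapseStep ρ rep c i ∈ F.dom) (collapseStep ρ rep)
    (fun c => F.nlabel (rep (ρ c))) F.elabel []

variable {ρ rep}

theorem isRun_collapse (hrun : IsRun A F ρ)
    (hrep : ∀ l ∈ F.dom, rep (ρ l) ∈ F.dom ∧ ρ (rep (ρ l)) = ρ l) :
    IsRun A (F.collapse ρ rep) fun w => ρ (w.foldl (collapseStep ρ rep) []) := by
  refine isRun_unfold F.root_mem (fun _ _ _ h => h) hrun.1 fun c hc => ?_
  obtain ⟨hrep_dom, hrep_state⟩ := hrep c hc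
  have hδ := hrun.2 _ hrep_dom
  rw [hrep_state] at hδ
  exact hδ

theorem isAccepting_collapse {α : Type*} [Preorder α] [WellFoundedLT α]
    (μ : List (Fin N) → α) (hμ : ∀ c p, UnmarkedChild A F ρ c p → μ c < μ p)
    (hrep : ∀ l ∈ F.dom, μ (rep (ρ l)) ≤ μ l) :
    IsAccepting A (F.collapse ρ rep) fun w => ρ (w.foldl (collapseStep ρ rep) []) := by
  intro b hb n
  by_contra! hnf
  let c (m : ℕ) : List (Fin N) := (branchPrefix b m).foldl (collapseStep ρ rep) []
  have hc : ∀ m, c (m + 1) = rep (ρ (c m)) ++ [b m] := by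
    simp [c, branchPrefix_succ, collapseStep]
  have hdom : ∀ m, c (m + 1) ∈ F.dom := by
    intro m
    have := hb (m + 1)
    rw [branchPrefix_succ] at this
    simpa [hc, collapseStep, IsPath] using (isPath_append.1 this).2
  refine not_strictAnti_of_wellFoundedLT (fun m => μ (rep (ρ (c (n + m)))))
    (strictAnti_nat_of_succ_lt fun m => ?_)
  calc μ (rep (ρ (c (n + m + 1)))) ≤ μ (c (n + m + 1)) := hrep _ (hdom _)
    _ < μ (rep (ρ (c (n + m)))) := hμ _ _ ⟨hdom _, hnf _ (by omega), b (n + m), hc _⟩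

theorem regular_collapse [Finite Q] : Regular (F.collapse ρ rep) := by
  have hfin := (Set.finite_range fun p : Q × Fin N => rep p.1 ++ [p.2]).insert []
  refine regular_unfold (hfin.subset ?_)
  rintro _ ⟨w, rfl⟩
  rcases w.eq_nil_or_concat with rfl | ⟨w, i, rfl⟩
  · exact Set.mem_insert _ _
  · refine Set.mem_insert_of_mem _ ⟨(ρ (w.foldl (collapseStep ρ rep) []), i), ?_⟩
    simp [collapseStep]

end Collapse

theorem buchi_regular_forest_general {N : ℕ} {Sg Γ Q : Type}
    [Finite Q]
    (A : ForestAutomaton N Sg Γ Q)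
    (hne : ∃ F : LForest N Sg Γ, Accepts A F) :
    ∃ F : LForest N Sg Γ, Accepts A F ∧ Regular F := by
  obtain ⟨F, ρ, hrun, hacc⟩ := hne
  have : IsWellFounded _ (UnmarkedChild A F ρ) := ⟨wellFounded_unmarkedChild hacc⟩
  obtain ⟨rep, hrep⟩ :=
    exists_section_le_of_wellFoundedLT F.dom ρ (IsWellFounded.rank (UnmarkedChild A F ρ))
  refine ⟨F.collapse ρ rep, ⟨fun w => ρ (w.foldl (collapseStep ρ rep) []), ?_, ?_⟩,
    regular_collapse⟩
  · exact isRun_collapse hrun fun l hl => ⟨(hrep l hl).1, (hrep l hl).2.1⟩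
  · exact isAccepting_collapse _ (fun _ _ => IsWellFounded.rank_lt_of_rel)
      fun l hl => (hrep l hl).2.2

/-- If a forest automaton with Büchi acceptance (over finite alphabets and a finite
state space) accepts some forest, then it accepts a regular forest, i.e., one with
finitely many non-isomorphic subtrees. -/
theorem buchi_regular_forest {N : ℕ} {Sg Γ Q : Type}
    [Finite Sg] [Finite Γ] [Finite Q]
    (A : ForestAutomaton N Sg Γ Q)
    (hne : ∃ F : LForest N Sg Γ, Accepts A F) :
    ∃ F : LForest N Sg Γ, Accepts A F ∧ Regular F :=
  buchi_regular_forest_general A hne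
end
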